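/- Let L be a bounded lattice and a ∈ L. Then the evaluation map ē_a belongs to MPM(D̄(L),2_τ), i.e. ē_a is a maximal partial morphism from the graph with topology D̄(L) = (SPH(L,2_B), E, τ) to 2_τ; furthermore, regarded as a partial map from D̄♭(L) = (SPH(L,2_B), E) to 2, ē_a belongs to MPE(D̄♭(L),2). -/

import Mathlib

/-!
`ē_a` is `E`-preserving and its two fibres are the subbasic closed sets `W_a` and `V_a`.
For maximality, let `ψ` be an `E`-preserving extension and `f` an SPH with `a ∉ dom f`.
Since `f⁻¹(1)` is an up-set missing `a`, it misses `↓a`, so `f` is `E`-below the principal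
SPH `g` with `g⁻¹(1) = {⊤}`, `g⁻¹(0) = ↓a`; as `ψ g = g a = 0`, `ψ f = 1` is impossible.
Dually, `f` is `E`-above the SPH with `g⁻¹(1) = ↑a`, `g⁻¹(0) = {⊥}`, which rules out `ψ f = 0`.
-/

namespace CanExt

open Classical

/-- A partial map from `X` into the two-element chain `{0,1}` (encoded as `Bool`,
with `false` playing the role of `0` and `true` the role of `1`);
`φ x = none` means `x` is outside the domain of `φ`. -/
abbrev PMap (X : Type*) := X → Option Bool

/-- The preimage of `1` of a partial map. -/
def pre1 {X : Type*} (φ : PMap X) : Set X := {x | φ x = some true}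

/-- The preimage of `0` of a partial map. -/
def pre0 {X : Type*} (φ : PMap X) : Set X := {x | φ x = some false}

/-- A partial map is `E`-preserving if whenever `x, y` lie in its domain and
`(x,y) ∈ E`, then `φ x ≤ φ y`. -/
def EPres {X : Type*} (E : X → X → Prop) (φ : PMap X) : Prop :=
  ∀ ⦃x y : X⦄, E x y → ∀ ⦃a b : Bool⦄, φ x = some a → φ y = some b → a ≤ b

/-- `PExt ψ φ` : the partial map `ψ` extends the partial map `φ`. -/
def PExt {X : Type*} (ψ φ : PMap X) : Prop :=
  ∀ ⦃x : X⦄ ⦃a : Bool⦄, φ x = some a → ψ x = some a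

/-- The set of maximal partial `E`-preserving maps from `(X,E)` into the
two-element chain `2`. -/
def MPE {X : Type*} (E : X → X → Prop) : Set (PMap X) :=
  {φ | EPres E φ ∧ ∀ ψ : PMap X, EPres E ψ → PExt ψ φ → ψ = φ}

/-- A partial morphism from a graph with topology `(X,E,t)` to `2_τ`:
the preimages of `1` and `0` are `t`-closed (equivalently, the domain is
closed and the restriction to the domain is continuous into discrete `2`),
and the map is `E`-preserving. -/
def PMorphT {X : Type*} (E : X → X → Prop) (t : TopologicalSpace X) (φ : PMap X) : Prop :=
  EPres E φ ∧ @IsClosed X t (pre1 φ) ∧ @IsClosed X t (pre0 φ)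

/-- The set of maximal partial morphisms from `(X,E,t)` to `2_τ`. -/
def MPM {X : Type*} (E : X → X → Prop) (t : TopologicalSpace X) : Set (PMap X) :=
  {φ | PMorphT E t φ ∧ ∀ ψ : PMap X, PMorphT E t ψ → PExt ψ φ → ψ = φ}

/-- The relation `E` between partial maps on a lattice `L`:
`(f,g) ∈ E` iff `f x ≤ g x` for all `x ∈ dom f ∩ dom g`. -/
def ErelP {L : Type*} (f g : PMap L) : Prop :=
  ∀ ⦃x : L⦄ ⦃a b : Bool⦄, f x = some a → g x = some b → a ≤ b

/-- `f ≤₁ g` iff `f⁻¹(1) ⊆ g⁻¹(1)`. -/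
def le1 {L : Type*} (f g : PMap L) : Prop := pre1 f ⊆ pre1 g

/-- `f ≤₂ g` iff `f⁻¹(0) ⊆ g⁻¹(0)`. -/
def le2 {L : Type*} (f g : PMap L) : Prop := pre0 f ⊆ pre0 g

section Lat

variable (L : Type*) [Lattice L] [BoundedOrder L]

/-- A partial homomorphism from a bounded lattice `L` to the two-element
bounded lattice `2_B`: its domain is a `{0,1}`-sublattice of `L` and the
restriction to the domain is a bounded-lattice homomorphism. -/
def PHom (f : PMap L) : Prop :=
  f ⊥ = some false ∧ f ⊤ = some true ∧
  ∀ ⦃a b : L⦄ ⦃x y : Bool⦄, f a = some x → f b = some y →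
    f (a ⊓ b) = some (x ⊓ y) ∧ f (a ⊔ b) = some (x ⊔ y)

/-- The set of maximal partial homomorphisms (MPHs) from `L` to `2_B`. -/
def MPHset : Set (PMap L) := {f | PHom L f ∧ ∀ g : PMap L, PHom L g → PExt g f → g = f}

/-- The underlying set of the graph `D♭(L)`. -/
abbrev MPHsub := {f : PMap L // f ∈ MPHset L}

/-- The relation `E` on `MPH(L, 2_B)`, giving the graph `D♭(L)`. -/
def EM (f g : MPHsub L) : Prop := ErelP f.1 g.1

/-- The evaluation map `e_a` on `MPH(L,2_B)` : `e_a(f) = f(a)` if `a ∈ dom f`. -/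
def evalM (a : L) : PMap (MPHsub L) := fun f => f.1 a

/-- `V_a = {f ∈ MPH(L,2_B) : f(a) = 0}`. -/
def VaM (a : L) : Set (MPHsub L) := {f | f.1 a = some false}

/-- `W_a = {f ∈ MPH(L,2_B) : f(a) = 1}`. -/
def WaM (a : L) : Set (MPHsub L) := {f | f.1 a = some true}

/-- The topology on `MPH(L,2_B)` with the sets `V_a`, `W_a` as a subbasis of
closed sets. -/
def tauM : TopologicalSpace (MPHsub L) :=
  TopologicalSpace.generateFrom {U | ∃ a : L, U = (VaM L a)ᶜ ∨ U = (WaM L a)ᶜ}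

/-- A (nonempty) lattice filter. -/
def IsLatFilter (F : Set L) : Prop :=
  F.Nonempty ∧ (∀ ⦃a b : L⦄, a ∈ F → a ≤ b → b ∈ F) ∧
    (∀ ⦃a b : L⦄, a ∈ F → b ∈ F → a ⊓ b ∈ F)

/-- A (nonempty) lattice ideal. -/
def IsLatIdeal (I : Set L) : Prop :=
  I.Nonempty ∧ (∀ ⦃a b : L⦄, a ∈ I → b ≤ a → b ∈ I) ∧
    (∀ ⦃a b : L⦄, a ∈ I → b ∈ I → a ⊔ b ∈ I)

/-- The set of special partial homomorphisms (SPHs) from `L` to `2_B`: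
`f⁻¹(1)` is a nonempty filter, `f⁻¹(0)` is a nonempty ideal, and they are
disjoint. -/
def SPHset : Set (PMap L) :=
  {f | IsLatFilter L (pre1 f) ∧ IsLatIdeal L (pre0 f) ∧ Disjoint (pre1 f) (pre0 f)}

/-- The underlying set of the graph `D̄♭(L)`. -/
abbrev SPHsub := {f : PMap L // f ∈ SPHset L}

/-- The relation `E` on `SPH(L, 2_B)`, giving the graph `D̄♭(L)`. -/
def ES (f g : SPHsub L) : Prop := ErelP f.1 g.1

/-- The evaluation map `ē_a` on `SPH(L,2_B)`. -/
def evalS (a : L) : PMap (SPHsub L) := fun f => f.1 a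

/-- `V_a = {f ∈ SPH(L,2_B) : f(a) = 0}`. -/
def VaS (a : L) : Set (SPHsub L) := {f | f.1 a = some false}

/-- `W_a = {f ∈ SPH(L,2_B) : f(a) = 1}`. -/
def WaS (a : L) : Set (SPHsub L) := {f | f.1 a = some true}

/-- The topology on `SPH(L,2_B)` with the sets `V_a`, `W_a` as a subbasis of
closed sets. -/
def tauS : TopologicalSpace (SPHsub L) :=
  TopologicalSpace.generateFrom {U | ∃ a : L, U = (VaS L a)ᶜ ∨ U = (WaS L a)ᶜ}

/-- The carrier of the completion built from `D♭(L)`. -/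
abbrev CX := {φ : PMap (MPHsub L) // φ ∈ MPE (EM L)}

/-- The carrier of the completion built from `D̄♭(L)`. -/
abbrev CY := {φ : PMap (SPHsub L) // φ ∈ MPE (ES L)}

end Lat

open Topology

theorem mem_MPM_of_mem_MPE {X : Type*} {E : X → X → Prop} {t : TopologicalSpace X}
    {φ : PMap X} (hφ : φ ∈ MPE E) (h1 : IsClosed[t] (pre1 φ)) (h0 : IsClosed[t] (pre0 φ)) :
    φ ∈ MPM E t :=
  ⟨⟨hφ.1, h1, h0⟩, fun ψ hψ hext => hφ.2 ψ hψ.1 hext⟩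

section Lattice

variable {L : Type*} [Lattice L]

theorem isLatFilter_Ici (b : L) : IsLatFilter L (Set.Ici b) :=
  ⟨⟨b, le_rfl⟩, fun _ _ hx hxy => le_trans hx hxy, fun _ _ hx hy => le_inf hx hy⟩

theorem isLatIdeal_Iic (c : L) : IsLatIdeal L (Set.Iic c) :=
  ⟨⟨c, le_rfl⟩, fun _ _ hx hyx => le_trans hyx hx, fun _ _ hx hy => sup_le hx hy⟩

/-- For `¬ b ≤ c`, the SPH with `f⁻¹(1) = ↑b` and `f⁻¹(0) = ↓c`. -/
noncomputable def principalSPH (b c : L) : PMap L := fun x =>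
  if b ≤ x then some true else if x ≤ c then some false else none

variable {b c : L}

theorem principalSPH_eq_true_iff {x : L} : principalSPH b c x = some true ↔ b ≤ x := by
  unfold principalSPH
  split_ifs <;> simp_all

theorem principalSPH_eq_false_iff (hbc : ¬ b ≤ c) {x : L} :
    principalSPH b c x = some false ↔ x ≤ c := by
  unfold principalSPH
  split_ifs with hbx hxc
  · simpa using fun hxc => hbc (le_trans hbx hxc)
  · simpa using hxc
  · simpa using hxc

theorem principalSPH_mem_SPHset (hbc : ¬ b ≤ c) : principalSPH b c ∈ SPHset L := by
  have h1 : pre1 (principalSPH b c) = Set.Ici b := Set.ext fun _ => principalSPH_eq_true_iff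
  have h0 : pre0 (principalSPH b c) = Set.Iic c :=
    Set.ext fun _ => principalSPH_eq_false_iff hbc
  rw [SPHset, Set.mem_ofPred_eq, h1, h0]
  exact ⟨isLatFilter_Ici b, isLatIdeal_Iic c,
    Set.disjoint_left.2 fun _ hbx hxc => hbc (le_trans hbx hxc)⟩

theorem ES_to_principalSPH (f : SPHsub L) (hbc : ¬ b ≤ c) (hfc : f.1 c ≠ some true) :
    ES L f ⟨principalSPH b c, principalSPH_mem_SPHset hbc⟩ := by
  intro x p q hfx hgx
  cases p
  · exact Bool.false_le q
  cases q
  · exact absurd (f.2.1.2.1 hfx ((principalSPH_eq_false_iff hbc).1 hgx)) hfc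
  · exact le_rfl

theorem ES_from_principalSPH (f : SPHsub L) (hbc : ¬ b ≤ c) (hfb : f.1 b ≠ some false) :
    ES L ⟨principalSPH b c, principalSPH_mem_SPHset hbc⟩ f := by
  intro x p q hgx hfx
  cases q
  · cases p
    · exact le_rfl
    · exact absurd (f.2.2.1.2.1 hfx (principalSPH_eq_true_iff.1 hgx)) hfb
  · exact Bool.le_true p

theorem evalS_ePres (a : L) : EPres (ES L) (evalS L a) :=
  fun _ _ hfg _ _ hfa hga => hfg hfa hga

theorem isClosed_WaS (a : L) : IsClosed[tauS L] (WaS L a) :=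
  @IsClosed.mk _ (tauS L) _ (TopologicalSpace.GenerateOpen.basic _ ⟨a, Or.inr rfl⟩)

theorem isClosed_VaS (a : L) : IsClosed[tauS L] (VaS L a) :=
  @IsClosed.mk _ (tauS L) _ (TopologicalSpace.GenerateOpen.basic _ ⟨a, Or.inl rfl⟩)

end Lattice

section BoundedLattice

variable {L : Type*} [Lattice L] [BoundedOrder L]

theorem SPHset.apply_top {f : PMap L} (hf : f ∈ SPHset L) : f ⊤ = some true := by
  obtain ⟨⟨u, hu⟩, hup, _⟩ := hf.1
  exact hup hu le_top

theorem SPHset.apply_bot {f : PMap L} (hf : f ∈ SPHset L) : f ⊥ = some false := by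
  obtain ⟨⟨u, hu⟩, hdown, _⟩ := hf.2.1
  exact hdown hu bot_le

theorem eq_evalS_of_ePres_of_pExt (a : L) {ψ : PMap (SPHsub L)} (hψ : EPres (ES L) ψ)
    (hext : PExt ψ (evalS L a)) : ψ = evalS L a := by
  funext f
  change ψ f = f.1 a
  cases hfa : f.1 a with
  | some p => exact hext hfa
  | none =>
    cases hψf : ψ f with
    | none => rfl
    | some p =>
      exfalso
      cases p with
      | true =>
        have hne : ¬ (⊤ : L) ≤ a := fun h => by
          rw [top_le_iff.1 h, SPHset.apply_top f.2] at hfa; cases hfa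
        have hψg : ψ ⟨principalSPH ⊤ a, principalSPH_mem_SPHset hne⟩ = some false :=
          hext ((principalSPH_eq_false_iff hne).2 le_rfl)
        exact absurd (hψ (ES_to_principalSPH f hne (by simp [hfa])) hψf hψg) (by decide)
      | false =>
        have hne : ¬ a ≤ (⊥ : L) := fun h => by
          rw [le_bot_iff.1 h, SPHset.apply_bot f.2] at hfa; cases hfa
        have hψg : ψ ⟨principalSPH a ⊥, principalSPH_mem_SPHset hne⟩ = some true :=
          hext (principalSPH_eq_true_iff.2 le_rfl)
        exact absurd (hψ (ES_from_principalSPH f hne (by simp [hfa])) hψg hψf) (by decide)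

end BoundedLattice

/-- Let `L` be a bounded lattice and `a ∈ L`. The
evaluation map `ē_a` is a maximal partial morphism from the graph with
topology `D̄(L) = (SPH(L,2_B), E, τ)` to `2_τ`; moreover, regarded as a
partial map from `D̄♭(L)` to `2`, it belongs to `MPE(D̄♭(L),2)`. -/
theorem stmt_14 (L : Type*) [Lattice L] [BoundedOrder L] (a : L) :
    evalS L a ∈ MPM (ES L) (tauS L) ∧ evalS L a ∈ MPE (ES L) := by
  have hMPE : evalS L a ∈ MPE (ES L) :=
    ⟨evalS_ePres a, fun _ hψ hext => eq_evalS_of_ePres_of_pExt a hψ hext⟩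
  exact ⟨mem_MPM_of_mem_MPE hMPE (isClosed_WaS a) (isClosed_VaS a), hMPE⟩

end CanExt
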